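/- Let h satisfy h(0)=0, h ≥ 0, h ≤ k_h, h(x) ≤ h'(0)x, h'(0)>0, and let N, β, γ, μ, σ > 0. Define V : (0,N) → ℝ by V(x) = 1/x + 1/(N−x), b(x) = βh(x)(N−x) − (γ+μ)x, a(x) = σh(x)(N−x). Then for all x ∈ (0,N), b(x)V'(x) + (1/2)a(x)²V''(x) ≤ c·V(x), where c = max{γ+μ+σ²(h'(0))²N², βk_h + σ²k_h²}. -/
import Mathlib


open Set

theorem stmt_3 (h : ℝ → ℝ) (h0' k_h N β γ μ σ : ℝ)
    (hh0 : h 0 = 0)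
    (hpos : ∀ x ∈ Ici (0:ℝ), 0 ≤ h x)
    (hbd : ∀ x ∈ Ici (0:ℝ), h x ≤ k_h)
    (hsub : ∀ x ∈ Ici (0:ℝ), h x ≤ h0' * x)
    (hh0' : 0 < h0')
    (hN : 0 < N) (hβ : 0 < β) (hγ : 0 < γ) (hμ : 0 < μ) (hσ : 0 < σ) :
    ∀ x ∈ Ioo (0:ℝ) N,
      (β * h x * (N - x) - (γ + μ) * x) * (-(1 / x ^ 2) + 1 / (N - x) ^ 2)
        + (1 / 2) * (σ * h x * (N - x)) ^ 2 * (2 / x ^ 3 + 2 / (N - x) ^ 3)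
      ≤ max (γ + μ + σ ^ 2 * h0' ^ 2 * N ^ 2) (β * k_h + σ ^ 2 * k_h ^ 2)
          * (1 / x + 1 / (N - x)) := by
  intro x hx
  obtain ⟨hx0, hxN⟩ := hx
  have hy0 : 0 < N - x := by linarith
  have hxI : x ∈ Ici (0:ℝ) := le_of_lt hx0
  have hh1 := hpos x hxI
  have hh2 := hbd x hxI
  have hh3 := hsub x hxI
  set y := N - x with hy
  set c1 := γ + μ + σ ^ 2 * h0' ^ 2 * N ^ 2 with hc1
  set c2 := β * k_h + σ ^ 2 * k_h ^ 2 with hc2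
  have hkh : 0 ≤ k_h := le_trans hh1 hh2
  have hA : (γ + μ) * x ^ 2 - β * h x * y * x + σ ^ 2 * (h x) ^ 2 * y ^ 2
      ≤ c1 * x ^ 2 := by
    have hsq1 : (h x) ^ 2 ≤ (h0' * x) ^ 2 := by nlinarith
    have hsq2 : y ^ 2 ≤ N ^ 2 := by nlinarith
    have hm : (h x) ^ 2 * y ^ 2 ≤ (h0' * x) ^ 2 * N ^ 2 :=
      mul_le_mul hsq1 hsq2 (by positivity) (by positivity)
    have hb : 0 ≤ β * h x * y * x := by positivity
    nlinarith [sq_nonneg σ]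
  have hB : β * h x * y + σ ^ 2 * (h x) ^ 2 * y - (γ + μ) * x ≤ c2 * y := by
    have hsq1 : (h x) ^ 2 ≤ k_h ^ 2 := by nlinarith
    have e1 : β * (h x * y) ≤ β * (k_h * y) :=
      mul_le_mul_of_nonneg_left (mul_le_mul_of_nonneg_right hh2 hy0.le) hβ.le
    have e2 : σ ^ 2 * ((h x) ^ 2 * y) ≤ σ ^ 2 * (k_h ^ 2 * y) :=
      mul_le_mul_of_nonneg_left (mul_le_mul_of_nonneg_right hsq1 hy0.le) (sq_nonneg σ)
    nlinarith [mul_pos hγ hx0, mul_pos hμ hx0]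
  have hA' : ((γ + μ) * x ^ 2 - β * h x * y * x + σ ^ 2 * (h x) ^ 2 * y ^ 2) / x ^ 3
      ≤ c1 / x := by
    rw [div_le_div_iff₀ (by positivity) hx0]
    calc ((γ + μ) * x ^ 2 - β * h x * y * x + σ ^ 2 * (h x) ^ 2 * y ^ 2) * x
        ≤ c1 * x ^ 2 * x := mul_le_mul_of_nonneg_right hA hx0.le
      _ = c1 * x ^ 3 := by ring
  have hB' : (β * h x * y + σ ^ 2 * (h x) ^ 2 * y - (γ + μ) * x) / y ^ 2
      ≤ c2 / y := by
    rw [div_le_div_iff₀ (by positivity) hy0]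
    calc (β * h x * y + σ ^ 2 * (h x) ^ 2 * y - (γ + μ) * x) * y
        ≤ c2 * y * y := mul_le_mul_of_nonneg_right hB hy0.le
      _ = c2 * y ^ 2 := by ring
  have heq : (β * h x * (N - x) - (γ + μ) * x) * (-(1 / x ^ 2) + 1 / (N - x) ^ 2)
        + (1 / 2) * (σ * h x * (N - x)) ^ 2 * (2 / x ^ 3 + 2 / (N - x) ^ 3)
      = ((γ + μ) * x ^ 2 - β * h x * y * x + σ ^ 2 * (h x) ^ 2 * y ^ 2) / x ^ 3
        + (β * h x * y + σ ^ 2 * (h x) ^ 2 * y - (γ + μ) * x) / y ^ 2 := by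
    rw [← hy]
    field_simp
    ring
  have hM1 : c1 ≤ max c1 c2 := le_max_left _ _
  have hM2 : c2 ≤ max c1 c2 := le_max_right _ _
  have h1 : c1 / x ≤ max c1 c2 / x := by gcongr
  have h2 : c2 / y ≤ max c1 c2 / y := by gcongr
  rw [heq]
  have : max c1 c2 * (1 / x + 1 / (N - x)) = max c1 c2 / x + max c1 c2 / y := by
    rw [← hy]; ring
  rw [this]
  linarith [hA', hB']
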